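/- arXiv:1808.10828 — 3 statements merged into one kernel-verified Lean document; each statement's English description precedes it below -/
import Mathlib

section
/- Let C be a copula lying in the copula domain of attraction of the extreme-value copula C_∞ associated with the stable tail dependence function L, with L ≠ L_∨ where L_∨(x) = max(x_1,…,x_d). Suppose Condition (SO)_b holds with continuous non-null S_b, α_b regularly varying of index ρ_b ≤ 0, and 2r·α_b(r) → 0 as r → ∞. Then: (i) for every x ∈ [0,∞)^d, 2t·(t(1 − C(1 − x/t)) − L(x)) → Γ₁(x) − L(x)² as t → ∞, and this limit function is not identically zero; (ii) this convergence is uniform on [0,T]^d for every T > 0 if and only if Γ₁ is continuous on [0,∞)^d. In particular, Condition (SO)_p holds (with the choice α_p(t) = 1/(2t) and S_p(x) = Γ₁(x) − L(x)²) if and only if Γ₁ is continuous. -/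
open Filter Topology

noncomputable section

/-- A `d`-variate stable tail dependence function: homogeneous of order 1, convex,
`L(e_j) = 1`, and `max ≤ L ≤ sum` on the nonnegative orthant. -/
def IsSTDF (d : ℕ) (L : (Fin d → ℝ) → ℝ) : Prop :=
  (∀ s : ℝ, 0 < s → ∀ x : Fin d → ℝ, (∀ j, 0 ≤ x j) → L (s • x) = s * L x) ∧
  ConvexOn ℝ (Set.Ici (0 : Fin d → ℝ)) L ∧
  (∀ j : Fin d, L (fun i => if i = j then (1 : ℝ) else 0) = 1) ∧
  (∀ x : Fin d → ℝ, (∀ j, 0 ≤ x j) → (∀ j, x j ≤ L x) ∧ L x ≤ ∑ j, x j)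

/-- The only properties of a copula that are used: `C(1,…,1) = 1`, `C(u) ≤ min_j u_j`,
and the ℓ¹-Lipschitz bound on the unit cube. -/
def IsCopulaLike (d : ℕ) (C : (Fin d → ℝ) → ℝ) : Prop :=
  C (fun _ => 1) = 1 ∧
  (∀ u : Fin d → ℝ, (∀ j, 0 ≤ u j ∧ u j ≤ 1) → ∀ j, C u ≤ u j) ∧
  (∀ u v : Fin d → ℝ, (∀ j, 0 ≤ u j ∧ u j ≤ 1) → (∀ j, 0 ≤ v j ∧ v j ≤ 1) →
    |C u - C v| ≤ ∑ j, |u j - v j|)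

/-- The extreme-value copula associated with the stable tail dependence function `L`:
`C_∞(u) = exp(−L(−log u_1,…,−log u_d))` for `u ∈ (0,1]^d`, and `0` if some `u_j = 0`. -/
def CinfFun (d : ℕ) (L : (Fin d → ℝ) → ℝ) (u : Fin d → ℝ) : ℝ :=
  if ∀ j, 0 < u j then Real.exp (-(L (fun j => -Real.log (u j)))) else 0

/-- Regular variation at infinity of index `ρ`. -/
def RegVary (f : ℝ → ℝ) (ρ : ℝ) : Prop :=
  ∀ x : ℝ, 0 < x → Filter.Tendsto (fun t => f (t * x) / f t) Filter.atTop (nhds (x ^ ρ))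

/-- POT form of the copula domain of attraction:
`t(1 − C(1 − x/t)) → L(x)` uniformly on `[0,T]^d` for every `T > 0`. -/
def PotDOA (d : ℕ) (C L : (Fin d → ℝ) → ℝ) : Prop :=
  ∀ T : ℝ, 0 < T → TendstoUniformlyOn
    (fun (t : ℝ) (x : Fin d → ℝ) => t * (1 - C (fun j => 1 - x j / t))) L Filter.atTop
    (Set.Icc (0 : Fin d → ℝ) (fun _ => T))

/-- BM form of the copula domain of attraction: `C(u^{1/r})^r → C_∞(u)` pointwise. -/
def BmDOA (d : ℕ) (C Cinf : (Fin d → ℝ) → ℝ) : Prop :=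
  ∀ u : Fin d → ℝ, (∀ j, 0 ≤ u j ∧ u j ≤ 1) →
    Filter.Tendsto (fun r : ℝ => C (fun j => u j ^ (1/r)) ^ r) Filter.atTop (nhds (Cinf u))

/-- The uniform-convergence part of Condition (SO)_p with auxiliary function `αp`
and limit `Sp`. -/
def SOpot (d : ℕ) (C L Sp : (Fin d → ℝ) → ℝ) (αp : ℝ → ℝ) : Prop :=
  ∀ T : ℝ, 0 < T → TendstoUniformlyOn
    (fun (t : ℝ) (x : Fin d → ℝ) => (t * (1 - C (fun j => 1 - x j / t)) - L x) / αp t)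
    Sp Filter.atTop (Set.Icc (0 : Fin d → ℝ) (fun _ => T))

/-- The uniform-convergence part of Condition (SO)_b with auxiliary function `αb`
and limit `Sb`. -/
def SObm (d : ℕ) (C Cinf Sb : (Fin d → ℝ) → ℝ) (αb : ℝ → ℝ) : Prop :=
  ∀ δ : ℝ, 0 < δ → δ < 1 → TendstoUniformlyOn
    (fun (r : ℝ) (u : Fin d → ℝ) => (C (fun j => u j ^ (1/r)) ^ r - Cinf u) / αb r)
    Sb Filter.atTop (Set.Icc (fun _ => δ) (fun _ => 1))

/-!
Write `s = 1 - C(1 - x/t)`, `y = -t log(1 - x/t)` and `z = x + x²/(2t)`. Then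
`C(1 - x/t) = C(u^{1/t})` for `u = exp(-y)`, so taking logarithms in (SO)_b at `u` and expanding
`-log(1 - s) = s + s²/2 + O(s³)` (with `s = O(1/t)`, `y = z + O(1/t²)`) gives, uniformly on
`[0,T]^d`,
`2t(ts - L(z)) = -(ts)² + O(t α_b(t) + 1/t) → -L(x)²`.

The remaining part `2t(L(z) - L(x))` is the difference quotient `r(L(x + x²/r) - L(x))` at
`r = 2t`, which tends to `Γ₁(x)`. By convexity of `L` this quotient is antitone in `r`, so Dini's
theorem makes the convergence uniform on compacts once `Γ₁` is continuous; conversely a uniform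
limit of continuous functions is continuous.

The limit is non-null: `Γ₁ = L²` together with `Γ₁(x) ≤ L(x²)` (subadditivity and homogeneity)
would give `L(x)^{2^n} ≤ L(x^{2^n}) ≤ d·(max_j x_j)^{2^n}` for all `n`, forcing `L = max`.
-/

lemma abs_neg_log_one_sub_sub_le {s : ℝ} (hs₀ : 0 ≤ s) (hs : s ≤ 1 / 2) :
    |-Real.log (1 - s) - (s + s ^ 2 / 2)| ≤ 2 * s ^ 3 := by
  have h := Real.abs_log_sub_add_sum_range_le (x := s) (by rw [abs_of_nonneg hs₀]; linarith) 2
  rw [abs_of_nonneg hs₀] at h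
  have h' : s ^ 3 / (1 - s) ≤ 2 * s ^ 3 := by
    rw [div_le_iff₀ (by linarith)]; nlinarith [pow_nonneg hs₀ 3]
  calc |-Real.log (1 - s) - (s + s ^ 2 / 2)|
      = |(∑ i ∈ Finset.range 2, s ^ (i + 1) / (i + 1)) + Real.log (1 - s)| := by
        rw [← abs_neg, Finset.sum_range_succ, Finset.sum_range_one]; congr 1; push_cast; ring
    _ ≤ 2 * s ^ 3 := h.trans h'

lemma neg_log_one_sub_le {s : ℝ} (hs₀ : 0 ≤ s) (hs : s ≤ 1 / 2) : -Real.log (1 - s) ≤ 2 * s := by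
  have h := Real.one_sub_inv_le_log_of_pos (x := 1 - s) (by linarith)
  have h' : (1 - s)⁻¹ ≤ 1 + 2 * s := by
    rw [inv_le_iff_one_le_mul₀ (by linarith)]; nlinarith
  linarith

lemma mul_neg_log_one_sub_div_mem_Icc {a t T : ℝ} (ha : 0 ≤ a) (haT : a ≤ T)
    (hTt : 2 * T ≤ t) (ht : 0 < t) : t * -Real.log (1 - a / t) ∈ Set.Icc 0 (2 * T) := by
  have has₀ : 0 ≤ a / t := div_nonneg ha ht.le
  have has : a / t ≤ 1 / 2 := by rw [div_le_iff₀ ht]; linarith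
  refine ⟨mul_nonneg ht.le (neg_nonneg.mpr (Real.log_nonpos (by linarith) (by linarith))), ?_⟩
  calc t * -Real.log (1 - a / t) ≤ t * (2 * (a / t)) := by gcongr; exact neg_log_one_sub_le has₀ has
    _ = 2 * a := by field_simp
    _ ≤ 2 * T := by linarith

lemma abs_mul_neg_log_one_sub_div_sub_le {a t T : ℝ} (ha : 0 ≤ a) (haT : a ≤ T)
    (hTt : 2 * T ≤ t) (ht : 0 < t) :
    |t * -Real.log (1 - a / t) - (a + a ^ 2 / (2 * t))| ≤ 2 * T ^ 3 / t ^ 2 := by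
  have h := abs_neg_log_one_sub_sub_le (div_nonneg ha ht.le)
    (by rw [div_le_iff₀ ht]; linarith)
  calc |t * -Real.log (1 - a / t) - (a + a ^ 2 / (2 * t))|
      = t * |-Real.log (1 - a / t) - (a / t + (a / t) ^ 2 / 2)| := by
        rw [← abs_of_pos ht, ← abs_mul, abs_of_pos ht]; congr 1; field_simp
    _ ≤ t * (2 * (a / t) ^ 3) := by gcongr
    _ = 2 * a ^ 3 / t ^ 2 := by field_simp
    _ ≤ 2 * T ^ 3 / t ^ 2 := by gcongr

lemma abs_log_sub_log_le_div {a b c : ℝ} (hc : 0 < c) (ha : c ≤ a) (hb : c ≤ b) :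
    |Real.log a - Real.log b| ≤ |a - b| / c := by
  have key : ∀ p q, c ≤ p → c ≤ q → Real.log p - Real.log q ≤ |p - q| / c := by
    intro p q hp hq
    have hp₀ : 0 < p := hc.trans_le hp
    have hq₀ : 0 < q := hc.trans_le hq
    calc Real.log p - Real.log q = Real.log (p / q) := (Real.log_div hp₀.ne' hq₀.ne').symm
      _ ≤ p / q - 1 := Real.log_le_sub_one_of_pos (by positivity)
      _ = (p - q) / q := by field_simp
      _ ≤ |p - q| / q := by gcongr; exact le_abs_self _
      _ ≤ |p - q| / c := by gcongr
  exact abs_sub_le_iff.mpr ⟨key a b ha hb, abs_sub_comm a b ▸ key b a hb ha⟩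

lemma le_of_forall_pow_two_pow_le {a c M : ℝ} (hM : 0 ≤ M)
    (h : ∀ n : ℕ, a ^ 2 ^ n ≤ c * M ^ 2 ^ n) : a ≤ M := by
  by_contra! hMa
  have ha : 0 < a := hM.trans_lt hMa
  have hlim : Tendsto (fun n : ℕ => c * (M / a) ^ 2 ^ n) atTop (𝓝 0) := by
    simpa using ((tendsto_pow_atTop_nhds_zero_of_lt_one (by positivity)
      ((div_lt_one ha).mpr hMa)).comp (tendsto_pow_atTop_atTop_of_one_lt one_lt_two)).const_mul c
  obtain ⟨n, hn⟩ := (hlim.eventually (gt_mem_nhds one_pos)).exists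
  rw [div_pow, mul_div_assoc', div_lt_one (by positivity)] at hn
  exact (h n).not_gt hn

lemma ConvexOn.mul_sub_le_mul_sub {E : Type*} [AddCommGroup E] [Module ℝ E] {s : Set E}
    {f : E → ℝ} (hf : ConvexOn ℝ s f) {x v : E} (hx : x ∈ s) {r r' : ℝ} (hr : 0 < r)
    (hrr' : r ≤ r') (hxv : x + r⁻¹ • v ∈ s) :
    r' * (f (x + r'⁻¹ • v) - f x) ≤ r * (f (x + r⁻¹ • v) - f x) := by
  have hr' : 0 < r' := hr.trans_le hrr'
  have hθ : r / r' ≤ 1 := (div_le_one hr').mpr hrr'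
  -- `x + r'⁻¹ • v` lies on the segment from `x` to `x + r⁻¹ • v`, at parameter `r / r'`
  have hseg : (1 - r / r') • x + (r / r') • (x + r⁻¹ • v) = x + r'⁻¹ • v := by
    rw [smul_add, smul_smul, show r / r' * r⁻¹ = r'⁻¹ by field_simp]
    module
  have hconv := hf.2 hx hxv (show 0 ≤ 1 - r / r' by linarith)
    (show 0 ≤ r / r' by positivity) (by ring)
  rw [hseg, smul_eq_mul, smul_eq_mul] at hconv
  calc r' * (f (x + r'⁻¹ • v) - f x)
      ≤ r' * ((r / r') * (f (x + r⁻¹ • v) - f x)) := by gcongr; linarith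
    _ = r * (f (x + r⁻¹ • v) - f x) := by field_simp

lemma exists_pos_forall_lt {ι : Type*} [Fintype ι] (x : ι → ℝ) : ∃ T, 0 < T ∧ ∀ j, x j < T :=
  ⟨∑ j, |x j| + 1, by positivity, fun j => (le_abs_self _).trans_lt <|
    (Finset.single_le_sum (f := fun i => |x i|) (fun i _ => abs_nonneg _)
      (Finset.mem_univ j)).trans_lt (lt_add_one _)⟩

lemma continuousOn_of_abs_sub_le_sum {ι : Type*} [Fintype ι] {f : (ι → ℝ) → ℝ}
    {s : Set (ι → ℝ)} (hf : ∀ a ∈ s, ∀ b ∈ s, |f a - f b| ≤ ∑ j, |a j - b j|) :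
    ContinuousOn f s := by
  refine (LipschitzOnWith.of_dist_le' (K := Fintype.card ι) fun a ha b hb => ?_).continuousOn
  rw [Real.dist_eq]
  calc |f a - f b| ≤ ∑ j, |a j - b j| := hf a ha b hb
    _ ≤ ∑ _j : ι, dist a b := Finset.sum_le_sum fun j _ => by
        rw [← Real.dist_eq]; exact dist_le_pi_dist a b j
    _ = Fintype.card ι * dist a b := by simp

lemma continuousOn_Ici_of_forall_Icc {ι : Type*} [Fintype ι] {f : (ι → ℝ) → ℝ}
    (hf : ∀ T, 0 < T → ContinuousOn f (Set.Icc 0 (fun _ => T))) :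
    ContinuousOn f (Set.Ici 0) := by
  intro x hx
  obtain ⟨T, hT, hxT⟩ := exists_pos_forall_lt x
  refine (hf T hT x ⟨hx, fun j => (hxT j).le⟩).mono_of_mem_nhdsWithin ?_
  rw [← Set.Ici_inter_Iic, ← Set.pi_univ_Iic]
  exact inter_mem_nhdsWithin _ (set_pi_mem_nhds Set.finite_univ fun j _ => Iic_mem_nhds (hxT j))

lemma one_sub_div_mem_unitInterval {a t : ℝ} (ha : 0 ≤ a) (hat : a ≤ t) :
    0 ≤ 1 - a / t ∧ 1 - a / t ≤ 1 :=
  ⟨sub_nonneg.2 (div_le_one_of_le₀ hat (ha.trans hat)),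
    sub_le_self _ (div_nonneg ha (ha.trans hat))⟩

lemma tendstoUniformlyOn_of_abs_sub_le {ι α : Type*} {l : Filter ι} {s : Set α}
    {F : ι → α → ℝ} {f : α → ℝ} {g : ι → ℝ} (hFg : ∀ᶠ i in l, ∀ x ∈ s, |F i x - f x| ≤ g i)
    (hg : Tendsto g l (𝓝 0)) : TendstoUniformlyOn F f l s := by
  rw [Metric.tendstoUniformlyOn_iff]
  intro ε hε
  filter_upwards [hFg, hg.eventually (eventually_lt_nhds hε)] with i hi hgi x hx
  rw [dist_comm, Real.dist_eq]
  exact (hi x hx).trans_lt hgi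

section

variable {d : ℕ} {C L Sb : (Fin d → ℝ) → ℝ} {αb : ℝ → ℝ}

lemma sum_le_card_mul_of_forall_le {x : Fin d → ℝ} {T : ℝ} (h : ∀ j, x j ≤ T) :
    ∑ j, x j ≤ d * T :=
  (Finset.sum_le_card_nsmul _ _ _ fun j _ => h j).trans_eq (by simp)

def tailApprox (C : (Fin d → ℝ) → ℝ) (t : ℝ) (x : Fin d → ℝ) : ℝ :=
  t * (1 - C (fun j => 1 - x j / t))

/-- The difference quotient whose limit as `r → ∞` is `Γ₁(x)`. -/
def gammaQuotient (L : (Fin d → ℝ) → ℝ) (r : ℝ) (x : Fin d → ℝ) : ℝ :=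
  r * (L (fun j => x j + x j ^ 2 / r) - L x)

lemma gammaQuotient_eq (L : (Fin d → ℝ) → ℝ) (r : ℝ) (x : Fin d → ℝ) :
    gammaQuotient L r x = r * (L (x + r⁻¹ • x ^ 2) - L x) := by
  unfold gammaQuotient
  congr 3
  funext j
  simp [div_eq_inv_mul]

lemma IsSTDF.nonneg (hL : IsSTDF d L) (hd : 0 < d) {x : Fin d → ℝ} (hx : 0 ≤ x) : 0 ≤ L x :=
  (hx ⟨0, hd⟩).trans ((hL.2.2.2 x hx).1 ⟨0, hd⟩)

lemma IsSTDF.le_card_mul (hL : IsSTDF d L) {T : ℝ} {x : Fin d → ℝ}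
    (hx : x ∈ Set.Icc (0 : Fin d → ℝ) (fun _ => T)) : L x ≤ d * T :=
  (hL.2.2.2 x hx.1).2.trans (sum_le_card_mul_of_forall_le hx.2)

lemma IsSTDF.add_le (hL : IsSTDF d L) {a b : Fin d → ℝ} (ha : 0 ≤ a) (hb : 0 ≤ b) :
    L (a + b) ≤ L a + L b := by
  have hconv := hL.2.1.2 ha hb (show (0 : ℝ) ≤ 1 / 2 by norm_num)
    (show (0 : ℝ) ≤ 1 / 2 by norm_num) (by norm_num)
  have hmid : 0 ≤ (1 / 2 : ℝ) • a + (1 / 2 : ℝ) • b :=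
    add_nonneg (smul_nonneg (by norm_num) ha) (smul_nonneg (by norm_num) hb)
  have hhom := hL.1 2 two_pos _ hmid
  rw [smul_add, smul_smul, smul_smul] at hhom
  norm_num at hhom hconv
  linarith

lemma IsSTDF.gammaQuotient_le_of_le (hL : IsSTDF d L) {x : Fin d → ℝ} (hx : 0 ≤ x) {r r' : ℝ}
    (hr : 0 < r) (hrr' : r ≤ r') : gammaQuotient L r' x ≤ gammaQuotient L r x := by
  rw [gammaQuotient_eq, gammaQuotient_eq]
  exact hL.2.1.mul_sub_le_mul_sub hx hr hrr'
    (add_nonneg hx (smul_nonneg (inv_nonneg.2 hr.le) (pow_nonneg hx 2)))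

lemma IsSTDF.gammaQuotient_le (hL : IsSTDF d L) {x : Fin d → ℝ} (hx : 0 ≤ x) {r : ℝ}
    (hr : 0 < r) : gammaQuotient L r x ≤ L (x ^ 2) := by
  have hx2 : 0 ≤ x ^ 2 := pow_nonneg hx 2
  have hsub := hL.add_le hx (smul_nonneg (inv_nonneg.2 hr.le) hx2)
  rw [hL.1 r⁻¹ (inv_pos.2 hr) _ hx2] at hsub
  rw [gammaQuotient_eq]
  calc r * (L (x + r⁻¹ • x ^ 2) - L x) ≤ r * (r⁻¹ * L (x ^ 2)) := by gcongr; linarith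
    _ = L (x ^ 2) := by field_simp

lemma IsSTDF.le_iSup_of_forall_sq_le (hL : IsSTDF d L) (hd : 0 < d)
    (h : ∀ x : Fin d → ℝ, 0 ≤ x → L x ^ 2 ≤ L (x ^ 2)) {x : Fin d → ℝ} (hx : 0 ≤ x) :
    L x ≤ ⨆ j, x j := by
  have : Nonempty (Fin d) := ⟨⟨0, hd⟩⟩
  have hxM : ∀ j, x j ≤ ⨆ j, x j := le_ciSup (Set.finite_range x).bddAbove
  have hpow : ∀ n : ℕ, L x ^ 2 ^ n ≤ L (x ^ 2 ^ n) := by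
    intro n
    induction n with
    | zero => simp
    | succ n ih =>
      calc L x ^ 2 ^ (n + 1) = (L x ^ 2 ^ n) ^ 2 := by rw [pow_succ, pow_mul]
        _ ≤ L (x ^ 2 ^ n) ^ 2 := by gcongr; exact pow_nonneg (hL.nonneg hd hx) _
        _ ≤ L ((x ^ 2 ^ n) ^ 2) := h _ (pow_nonneg hx _)
        _ = L (x ^ 2 ^ (n + 1)) := by rw [← pow_mul, ← pow_succ]
  refine le_of_forall_pow_two_pow_le (c := d) ((hx ⟨0, hd⟩).trans (hxM _))
    fun n => (hpow n).trans ?_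
  exact (hL.2.2.2 _ (pow_nonneg hx _)).2.trans
    (sum_le_card_mul_of_forall_le fun j => pow_le_pow_left₀ (hx j) (hxM j) _)

lemma IsSTDF.exists_sub_sq_ne_zero (hL : IsSTDF d L) (hd : 0 < d)
    (hLne : ∃ x : Fin d → ℝ, (∀ j, 0 ≤ x j) ∧ L x ≠ ⨆ j, x j) {Γ₁ : (Fin d → ℝ) → ℝ}
    (hΓ₁ : ∀ x, 0 ≤ x → Tendsto (fun r => gammaQuotient L r x) atTop (𝓝 (Γ₁ x))) :
    ∃ x : Fin d → ℝ, 0 ≤ x ∧ Γ₁ x - L x ^ 2 ≠ 0 := by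
  by_contra! h
  obtain ⟨x, hx, hne⟩ := hLne
  have : Nonempty (Fin d) := ⟨⟨0, hd⟩⟩
  refine hne (le_antisymm (hL.le_iSup_of_forall_sq_le hd (fun y hy => ?_) hx)
    (ciSup_le (hL.2.2.2 x hx).1))
  rw [← sub_eq_zero.mp (h y hy)]
  exact le_of_tendsto (hΓ₁ y hy)
    ((eventually_gt_atTop 0).mono fun r hr => hL.gammaQuotient_le hy hr)

lemma continuousOn_gammaQuotient (hLcont : ContinuousOn L (Set.Ici 0)) {r : ℝ} (hr : 0 < r) :
    ContinuousOn (gammaQuotient L r) (Set.Ici 0) := by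
  have hmaps : Set.MapsTo (fun x : Fin d → ℝ => fun j => x j + x j ^ 2 / r) (Set.Ici 0)
      (Set.Ici 0) := fun x hx j => show 0 ≤ x j + x j ^ 2 / r by have : 0 ≤ x j := hx j; positivity
  exact continuousOn_const.mul ((hLcont.comp (by fun_prop) hmaps).sub hLcont)

/-- Dini's theorem, applied to `r ↦ gammaQuotient L (max r 1)`, which is antitone by convexity. -/
lemma IsSTDF.tendstoUniformlyOn_gammaQuotient (hL : IsSTDF d L)
    (hLcont : ContinuousOn L (Set.Ici 0)) {Γ₁ : (Fin d → ℝ) → ℝ}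
    (hΓ₁ : ∀ x, 0 ≤ x → Tendsto (fun r => gammaQuotient L r x) atTop (𝓝 (Γ₁ x)))
    (hΓcont : ContinuousOn Γ₁ (Set.Ici 0)) (T : ℝ) :
    TendstoUniformlyOn (gammaQuotient L) Γ₁ atTop (Set.Icc (0 : Fin d → ℝ) (fun _ => T)) := by
  have hmax : Tendsto (fun r : ℝ => max r 1) atTop atTop :=
    tendsto_atTop_mono (fun r => le_max_left r 1) tendsto_id
  have hK : Set.Icc (0 : Fin d → ℝ) (fun _ => T) ⊆ Set.Ici 0 := fun _ hx => hx.1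
  refine (Antitone.tendstoUniformlyOn_of_forall_tendsto isCompact_Icc
    (F := fun r => gammaQuotient L (max r 1))
    (fun r => (continuousOn_gammaQuotient hLcont (by positivity)).mono hK)
    (fun x hx r r' hrr' => hL.gammaQuotient_le_of_le hx.1 (by positivity) (max_le_max_right 1 hrr'))
    (hΓcont.mono hK) (fun x hx => (hΓ₁ x hx.1).comp hmax)).congr ?_
  filter_upwards [eventually_ge_atTop 1] with r hr x _
  simp [max_eq_left hr]

lemma IsCopulaLike.one_sub_le_sum (hC : IsCopulaLike d C) {u : Fin d → ℝ}
    (hu : ∀ j, 0 ≤ u j ∧ u j ≤ 1) : 1 - C u ≤ ∑ j, (1 - u j) := by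
  have h := hC.2.2 (fun _ => 1) u (fun _ => ⟨zero_le_one, le_rfl⟩) hu
  rw [hC.1] at h
  calc 1 - C u ≤ |1 - C u| := le_abs_self _
    _ ≤ ∑ j, |1 - u j| := h
    _ = ∑ j, (1 - u j) := Finset.sum_congr rfl fun j _ => abs_of_nonneg (sub_nonneg.2 (hu j).2)

lemma IsCopulaLike.le_one (hC : IsCopulaLike d C) (hd : 0 < d) {u : Fin d → ℝ}
    (hu : ∀ j, 0 ≤ u j ∧ u j ≤ 1) : C u ≤ 1 :=
  (hC.2.1 u hu ⟨0, hd⟩).trans (hu _).2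

lemma IsCopulaLike.continuousOn (hC : IsCopulaLike d C) :
    ContinuousOn C (Set.Icc (0 : Fin d → ℝ) (fun _ => 1)) :=
  continuousOn_of_abs_sub_le_sum fun a ha b hb =>
    hC.2.2 a b (fun j => ⟨ha.1 j, ha.2 j⟩) (fun j => ⟨hb.1 j, hb.2 j⟩)

lemma IsCopulaLike.continuousOn_tailApprox (hC : IsCopulaLike d C) {t T : ℝ} (hTt : T ≤ t) :
    ContinuousOn (tailApprox C t) (Set.Icc 0 (fun _ => T)) := by
  have hmaps : Set.MapsTo (fun x : Fin d → ℝ => fun j => 1 - x j / t)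
      (Set.Icc 0 (fun _ => T)) (Set.Icc 0 (fun _ => 1)) := fun x hx =>
    ⟨fun j => (one_sub_div_mem_unitInterval (hx.1 j) ((hx.2 j).trans hTt)).1,
      fun j => (one_sub_div_mem_unitInterval (hx.1 j) ((hx.2 j).trans hTt)).2⟩
  exact continuousOn_const.mul (continuousOn_const.sub (hC.continuousOn.comp (by fun_prop) hmaps))

lemma IsCopulaLike.one_half_le_exp_neg_div (hC : IsCopulaLike d C) {B r : ℝ} (hr : 0 < r)
    (hBr : 2 * d * B ≤ r) {y : Fin d → ℝ} (hy : y ∈ Set.Icc 0 (fun _ => B)) :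
    1 / 2 ≤ C (fun j => Real.exp (-y j / r)) := by
  have hw : ∀ j, 0 ≤ Real.exp (-y j / r) ∧ Real.exp (-y j / r) ≤ 1 := fun j =>
    ⟨(Real.exp_pos _).le, Real.exp_le_one_iff.mpr
      (div_nonpos_of_nonpos_of_nonneg (neg_nonpos.mpr (hy.1 j)) hr.le)⟩
  have hsum : ∑ j, (1 - Real.exp (-y j / r)) ≤ d * (B / r) :=
    sum_le_card_mul_of_forall_le fun j => by
      have := Real.add_one_le_exp (-y j / r)
      have : y j / r ≤ B / r := by gcongr; exact hy.2 j
      linarith [neg_div r (y j)]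
  have hdB : (d : ℝ) * (B / r) ≤ 1 / 2 := by rw [mul_div_assoc', div_le_iff₀ hr]; linarith
  linarith [hC.one_sub_le_sum hw]

section

variable {t : ℝ} {x : Fin d → ℝ}

lemma IsCopulaLike.tailApprox_mem_Icc (hC : IsCopulaLike d C) (hd : 0 < d) {T : ℝ} (ht : 0 < t)
    (hTt : T ≤ t) (hx : x ∈ Set.Icc 0 (fun _ => T)) : tailApprox C t x ∈ Set.Icc 0 (d * T) := by
  have hu : ∀ j, 0 ≤ 1 - x j / t ∧ 1 - x j / t ≤ 1 :=
    fun j => one_sub_div_mem_unitInterval (hx.1 j) ((hx.2 j).trans hTt)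
  refine ⟨mul_nonneg ht.le (sub_nonneg.2 (hC.le_one hd hu)), ?_⟩
  calc tailApprox C t x ≤ t * ∑ j, (1 - (1 - x j / t)) := by
        unfold tailApprox; gcongr; exact hC.one_sub_le_sum hu
    _ = ∑ j, x j := by
        rw [Finset.mul_sum]; exact Finset.sum_congr rfl fun j _ => by field_simp; ring
    _ ≤ d * T := sum_le_card_mul_of_forall_le hx.2

lemma IsCopulaLike.abs_tailApprox_sub_le (hC : IsCopulaLike d C) (ht : 0 < t) {a b : Fin d → ℝ}
    (ha₀ : 0 ≤ a) (hat : ∀ j, a j ≤ t) (hb₀ : 0 ≤ b) (hbt : ∀ j, b j ≤ t) :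
    |tailApprox C t a - tailApprox C t b| ≤ ∑ j, |a j - b j| := by
  have h := hC.2.2 _ _ (fun j => one_sub_div_mem_unitInterval (hb₀ j) (hbt j))
    (fun j => one_sub_div_mem_unitInterval (ha₀ j) (hat j))
  calc |tailApprox C t a - tailApprox C t b|
      = t * |C (fun j => 1 - b j / t) - C (fun j => 1 - a j / t)| := by
        rw [← abs_of_pos ht, ← abs_mul, abs_of_pos ht]; unfold tailApprox; congr 1; ring
    _ ≤ t * ∑ j, |(1 - b j / t) - (1 - a j / t)| := by gcongr
    _ = ∑ j, |a j - b j| := by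
        rw [Finset.mul_sum]
        refine Finset.sum_congr rfl fun j _ => ?_
        rw [show (1 - b j / t) - (1 - a j / t) = (a j - b j) / t by ring, abs_div,
          abs_of_pos ht]
        field_simp

end

lemma PotDOA.abs_sub_le (hDOA : PotDOA d C L) (hC : IsCopulaLike d C) {a b : Fin d → ℝ}
    (ha : 0 ≤ a) (hb : 0 ≤ b) : |L a - L b| ≤ ∑ j, |a j - b j| := by
  obtain ⟨T, hT, hab⟩ := exists_pos_forall_lt (a + b)
  have haT : ∀ j, a j ≤ T := fun j => (le_add_of_nonneg_right (hb j)).trans (hab j).le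
  have hbT : ∀ j, b j ≤ T := fun j => (le_add_of_nonneg_left (ha j)).trans (hab j).le
  have hlim := ((hDOA T hT).tendsto_at ⟨ha, haT⟩).sub ((hDOA T hT).tendsto_at ⟨hb, hbT⟩)
  refine le_of_tendsto hlim.abs ?_
  filter_upwards [eventually_ge_atTop T] with t ht
  exact hC.abs_tailApprox_sub_le (hT.trans_le ht) ha (fun j => (haT j).trans ht) hb
    (fun j => (hbT j).trans ht)

lemma PotDOA.continuousOn (hDOA : PotDOA d C L) (hC : IsCopulaLike d C) :
    ContinuousOn L (Set.Ici 0) :=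
  continuousOn_of_abs_sub_le_sum fun _ ha _ hb => hDOA.abs_sub_le hC ha hb

lemma PotDOA.continuousOn_of_tendstoUniformlyOn (hDOA : PotDOA d C L) (hC : IsCopulaLike d C)
    {S : (Fin d → ℝ) → ℝ} (h : ∀ T, 0 < T → TendstoUniformlyOn
      (fun t x => 2 * t * (tailApprox C t x - L x)) S atTop (Set.Icc 0 (fun _ => T))) :
    ContinuousOn S (Set.Ici 0) := by
  refine continuousOn_Ici_of_forall_Icc fun T hT => (h T hT).continuousOn ?_
  refine (eventually_ge_atTop T).frequently.mono fun t ht => ?_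
  exact continuousOn_const.mul ((hC.continuousOn_tailApprox ht).sub
    ((hDOA.continuousOn hC).mono fun _ hx => hx.1))

lemma sOpot_one_div_two_mul_iff {S : (Fin d → ℝ) → ℝ} :
    SOpot d C L S (fun t => 1 / (2 * t)) ↔ ∀ T, 0 < T → TendstoUniformlyOn
      (fun t x => 2 * t * (tailApprox C t x - L x)) S atTop (Set.Icc 0 (fun _ => T)) := by
  have heq : ∀ᶠ t in atTop, ∀ x : Fin d → ℝ,
      (tailApprox C t x - L x) / (1 / (2 * t)) = 2 * t * (tailApprox C t x - L x) :=
    (eventually_gt_atTop 0).mono fun t ht x => by field_simp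
  refine forall₂_congr fun T _ => ⟨fun h => h.congr ?_, fun h => h.congr ?_⟩ <;>
    filter_upwards [heq] with t ht x _
  · exact ht x
  · exact (ht x).symm

lemma SObm.exists_abs_sub_le {Cinf : (Fin d → ℝ) → ℝ} (hSO : SObm d C Cinf Sb αb)
    (hScont : ContinuousOn Sb (Set.Icc (0 : Fin d → ℝ) (fun _ => 1)))
    (hαpos : ∀ r : ℝ, 0 < r → 0 < αb r) {δ : ℝ} (hδ₀ : 0 < δ) (hδ₁ : δ < 1) :
    ∃ c, ∀ᶠ r in atTop, ∀ u ∈ Set.Icc (fun _ : Fin d => δ) (fun _ => 1),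
      |C (fun j => u j ^ (1 / r)) ^ r - Cinf u| ≤ c * αb r := by
  obtain ⟨M, hM⟩ := isCompact_Icc.exists_bound_of_continuousOn hScont
  refine ⟨M + 1, ?_⟩
  filter_upwards [Metric.tendstoUniformlyOn_iff.mp (hSO δ hδ₀ hδ₁) 1 one_pos,
    eventually_gt_atTop 0] with r hr hr₀ u hu
  have hSu : |Sb u| ≤ M := hM u ⟨fun j => hδ₀.le.trans (hu.1 j), hu.2⟩
  have hq := hr u hu
  rw [Real.dist_eq] at hq
  have hq' : |(C (fun j => u j ^ (1 / r)) ^ r - Cinf u) / αb r| ≤ M + 1 := by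
    have := abs_sub_abs_le_abs_sub ((C (fun j => u j ^ (1 / r)) ^ r - Cinf u) / αb r) (Sb u)
    rw [abs_sub_comm] at this
    linarith
  rwa [abs_div, abs_of_pos (hαpos r hr₀), div_le_iff₀ (hαpos r hr₀)] at hq'

/-- (SO)_b in logarithmic form, evaluated at `u = exp (-y)`. -/
lemma SObm.exists_abs_mul_log_add_le (hSO : SObm d C (CinfFun d L) Sb αb)
    (hL : IsSTDF d L) (hC : IsCopulaLike d C)
    (hScont : ContinuousOn Sb (Set.Icc (0 : Fin d → ℝ) (fun _ => 1)))
    (hαpos : ∀ r : ℝ, 0 < r → 0 < αb r) (hα0 : Tendsto αb atTop (𝓝 0)) {B : ℝ} (hB : 0 ≤ B) :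
    ∃ c, ∀ᶠ r in atTop, ∀ y ∈ Set.Icc (0 : Fin d → ℝ) (fun _ => B),
      |r * Real.log (C (fun j => Real.exp (-y j / r))) + L y| ≤ c * αb r := by
  set κ := Real.exp (-(d * B))
  have hκ₀ : 0 < κ := Real.exp_pos _
  obtain ⟨c, hc⟩ := hSO.exists_abs_sub_le hScont hαpos (Real.exp_pos (-(B + 1)))
    (Real.exp_lt_one_iff.mpr (by linarith))
  have hcα : Tendsto (fun r => c * αb r) atTop (𝓝 0) := by simpa using hα0.const_mul c
  refine ⟨c / (κ / 2), ?_⟩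
  filter_upwards [hc, eventually_ge_atTop (2 * d * B), eventually_gt_atTop 0,
    hcα.eventually (eventually_le_nhds (half_pos hκ₀))] with r hcr hBr hr hcακ y hy
  have hu : (fun j => Real.exp (-y j)) ∈ Set.Icc (fun _ : Fin d => Real.exp (-(B + 1))) 1 :=
    ⟨fun j => Real.exp_le_exp.mpr (by linarith [hy.2 j]),
      fun j => Real.exp_le_one_iff.mpr (neg_nonpos.mpr (hy.1 j))⟩
  have hroot : (fun j => Real.exp (-y j) ^ (1 / r)) = fun j => Real.exp (-y j / r) := by
    funext j; rw [← Real.exp_mul]; ring_nf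
  have hCinf : CinfFun d L (fun j => Real.exp (-y j)) = Real.exp (-L y) := by
    simp [CinfFun, Real.exp_pos]
  have hbm := hcr _ hu
  rw [hroot, hCinf] at hbm
  have hCw := hC.one_half_le_exp_neg_div hr hBr hy
  have hκL : κ ≤ Real.exp (-L y) := Real.exp_le_exp.mpr (by linarith [hL.le_card_mul hy])
  have hlog := abs_log_sub_log_le_div (a := C (fun j => Real.exp (-y j / r)) ^ r)
    (b := Real.exp (-L y)) (half_pos hκ₀) (by linarith [(abs_le.mp hbm).1]) (by linarith)
  rw [Real.log_rpow (by linarith), Real.log_exp, sub_neg_eq_add] at hlog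
  calc |r * Real.log (C (fun j => Real.exp (-y j / r))) + L y|
      ≤ |C (fun j => Real.exp (-y j / r)) ^ r - Real.exp (-L y)| / (κ / 2) := hlog
    _ ≤ c * αb r / (κ / 2) := by gcongr
    _ = c / (κ / 2) * αb r := by ring

lemma SObm.exists_abs_mul_log_one_sub_tailApprox_add_le (hSO : SObm d C (CinfFun d L) Sb αb)
    (hL : IsSTDF d L) (hC : IsCopulaLike d C)
    (hScont : ContinuousOn Sb (Set.Icc (0 : Fin d → ℝ) (fun _ => 1)))
    (hαpos : ∀ r : ℝ, 0 < r → 0 < αb r) (hα0 : Tendsto αb atTop (𝓝 0)) {T : ℝ} (hT : 0 < T) :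
    ∃ c, ∀ᶠ t in atTop, ∀ x ∈ Set.Icc (0 : Fin d → ℝ) (fun _ => T),
      |t * Real.log (1 - tailApprox C t x / t) + L (fun j => t * -Real.log (1 - x j / t))|
        ≤ c * αb t := by
  obtain ⟨c, hc⟩ := hSO.exists_abs_mul_log_add_le hL hC hScont hαpos hα0 (by positivity : 0 ≤ 2 * T)
  refine ⟨c, ?_⟩
  filter_upwards [hc, eventually_ge_atTop (2 * T), eventually_gt_atTop 0] with t hct hTt ht x hx
  have hy := fun j => mul_neg_log_one_sub_div_mem_Icc (hx.1 j) (hx.2 j) hTt ht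
  have hw : (fun j => Real.exp (-(t * -Real.log (1 - x j / t)) / t)) = fun j => 1 - x j / t := by
    funext j
    have : x j / t < 1 := by rw [div_lt_one ht]; linarith [hx.2 j]
    rw [mul_neg, neg_neg, mul_div_cancel_left₀ _ ht.ne', Real.exp_log (by linarith)]
  have hCτ : C (fun j => 1 - x j / t) = 1 - tailApprox C t x / t := by
    rw [tailApprox, mul_div_cancel_left₀ _ ht.ne']; ring
  simpa only [hw, hCτ] using hct _ ⟨fun j => (hy j).1, fun j => (hy j).2⟩

lemma exists_abs_two_mul_tailApprox_sub_add_sq_le (hd : 0 < d) (hL : IsSTDF d L)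
    (hC : IsCopulaLike d C) (hDOA : PotDOA d C L) (hSO : SObm d C (CinfFun d L) Sb αb)
    (hScont : ContinuousOn Sb (Set.Icc (0 : Fin d → ℝ) (fun _ => 1)))
    (hαpos : ∀ r : ℝ, 0 < r → 0 < αb r) (hα0 : Tendsto αb atTop (𝓝 0)) {T : ℝ} (hT : 0 < T) :
    ∃ a b : ℝ, ∀ᶠ t in atTop, ∀ x ∈ Set.Icc (0 : Fin d → ℝ) (fun _ => T),
      |2 * t * (tailApprox C t x - L (fun j => x j + x j ^ 2 / (2 * t))) + tailApprox C t x ^ 2|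
        ≤ a * (t * αb t) + b / t := by
  obtain ⟨c, hc⟩ := hSO.exists_abs_mul_log_one_sub_tailApprox_add_le hL hC hScont hαpos hα0 hT
  have hd₁ : (1 : ℝ) ≤ d := Nat.one_le_cast.mpr hd
  refine ⟨2 * c, 4 * (d * T) ^ 3 + 4 * d * T ^ 3, ?_⟩
  filter_upwards [hc, eventually_ge_atTop (2 * d * T), eventually_gt_atTop 0]
    with t hct hdTt ht x hx
  have hlog := hct x hx
  have hTt : 2 * T ≤ t := by nlinarith
  set τ := tailApprox C t x
  obtain ⟨hτ₀, hτT⟩ := hC.tailApprox_mem_Icc hd ht (by linarith) hx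
  have hτt : τ / t ≤ 1 / 2 := by rw [div_le_iff₀ ht]; nlinarith
  -- `y` is the point at which (SO)_b is evaluated; it is `z` up to `O(1/t²)`
  set y : Fin d → ℝ := fun j => t * -Real.log (1 - x j / t)
  set z : Fin d → ℝ := fun j => x j + x j ^ 2 / (2 * t)
  have hLyz : |L y - L z| ≤ d * (2 * T ^ 3 / t ^ 2) :=
    (hDOA.abs_sub_le hC (fun j => (mul_neg_log_one_sub_div_mem_Icc (hx.1 j) (hx.2 j) hTt ht).1)
      fun j => show 0 ≤ x j + x j ^ 2 / (2 * t) by have : 0 ≤ x j := hx.1 j; positivity).trans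
      (sum_le_card_mul_of_forall_le fun j =>
        abs_mul_neg_log_one_sub_div_sub_le (hx.1 j) (hx.2 j) hTt ht)
  have hℓ := abs_neg_log_one_sub_sub_le (div_nonneg hτ₀ ht.le) hτt
  have hτ3 : (τ / t) ^ 3 ≤ (d * T / t) ^ 3 := by gcongr
  calc |2 * t * (τ - L z) + τ ^ 2|
      = |-(2 * t ^ 2 * (-Real.log (1 - τ / t) - (τ / t + (τ / t) ^ 2 / 2)))
          - 2 * t * (t * Real.log (1 - τ / t) + L y) + 2 * t * (L y - L z)| := by
        congr 1; field_simp; ring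
    _ ≤ 2 * t ^ 2 * |-Real.log (1 - τ / t) - (τ / t + (τ / t) ^ 2 / 2)|
          + 2 * t * |t * Real.log (1 - τ / t) + L y| + 2 * t * |L y - L z| := by
        refine (abs_add_le _ _).trans (add_le_add ((abs_sub _ _).trans (add_le_add ?_ ?_)) ?_)
          <;> simp [abs_mul, abs_of_pos ht]
    _ ≤ 2 * t ^ 2 * (2 * (d * T / t) ^ 3) + 2 * t * (c * αb t)
          + 2 * t * (d * (2 * T ^ 3 / t ^ 2)) := by gcongr; linarith
    _ = 2 * c * (t * αb t) + (4 * (d * T) ^ 3 + 4 * d * T ^ 3) / t := by field_simp; ring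

lemma tendstoUniformlyOn_two_mul_tailApprox_sub (hd : 0 < d) (hL : IsSTDF d L)
    (hC : IsCopulaLike d C) (hDOA : PotDOA d C L) (hSO : SObm d C (CinfFun d L) Sb αb)
    (hScont : ContinuousOn Sb (Set.Icc (0 : Fin d → ℝ) (fun _ => 1)))
    (hαpos : ∀ r : ℝ, 0 < r → 0 < αb r) (hα0 : Tendsto αb atTop (𝓝 0))
    (hc0 : Tendsto (fun r : ℝ => 2 * r * αb r) atTop (𝓝 0)) {T : ℝ} (hT : 0 < T) :
    TendstoUniformlyOn
      (fun t x => 2 * t * (tailApprox C t x - L (fun j => x j + x j ^ 2 / (2 * t))))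
      (fun x => -L x ^ 2) atTop (Set.Icc (0 : Fin d → ℝ) (fun _ => T)) := by
  obtain ⟨a, b, hab⟩ :=
    exists_abs_two_mul_tailApprox_sub_add_sq_le hd hL hC hDOA hSO hScont hαpos hα0 hT
  have htα : Tendsto (fun t => t * αb t) atTop (𝓝 0) := by
    convert hc0.const_mul (1 / 2) using 2 <;> ring
  have hE := tendstoUniformlyOn_of_abs_sub_le
    (F := fun t x => 2 * t * (tailApprox C t x - L (fun j => x j + x j ^ 2 / (2 * t)))
      + tailApprox C t x ^ 2) (f := fun _ => 0)
    (hab.mono fun t ht x hx => by simpa using ht x hx)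
    (by simpa using (htα.const_mul a).add (tendsto_const_nhds.div_atTop tendsto_id))
  have hsq : TendstoUniformlyOn (fun t x => tailApprox C t x ^ 2) (fun x => L x ^ 2) atTop
      (Set.Icc (0 : Fin d → ℝ) (fun _ => T)) := by
    have hg : UniformContinuousOn (fun y : ℝ => y ^ 2) (Set.Icc 0 (d * T)) :=
      isCompact_Icc.uniformContinuousOn_of_continuous (continuous_pow 2).continuousOn
    refine hg.comp_tendstoUniformlyOn_eventually ?_ (fun x hx => ?_) (hDOA T hT)
    · filter_upwards [eventually_ge_atTop T] with t ht x hx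
        using hC.tailApprox_mem_Icc hd (hT.trans_le ht) ht hx
    · exact ⟨hL.nonneg hd hx.1, hL.le_card_mul hx⟩
  refine ((hE.sub hsq).congr (Eventually.of_forall fun t x _ => ?_)).congr_right fun x _ => ?_
  · simp only [Pi.sub_apply]; ring
  · simp

end

theorem statement13_general {d : ℕ} (hd : 0 < d) (C L Sb : (Fin d → ℝ) → ℝ) (αb : ℝ → ℝ)
    (hL : IsSTDF d L) (hC : IsCopulaLike d C)
    (hLne : ∃ x : Fin d → ℝ, (∀ j, 0 ≤ x j) ∧ L x ≠ ⨆ j, x j)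
    (hDOA : PotDOA d C L)
    (hαpos : ∀ r : ℝ, 0 < r → 0 < αb r)
    (hα0 : Filter.Tendsto αb Filter.atTop (nhds 0))
    (hScont : ContinuousOn Sb (Set.Icc (0 : Fin d → ℝ) (fun _ => 1)))
    (hSO : SObm d C (CinfFun d L) Sb αb)
    (hc0 : Filter.Tendsto (fun r : ℝ => 2 * r * αb r) Filter.atTop (nhds 0))
    (Γ₁ : (Fin d → ℝ) → ℝ)
    (hΓ₁ : ∀ x : Fin d → ℝ, (∀ j, 0 ≤ x j) →
      Filter.Tendsto (fun r : ℝ => r * (L (fun j => x j + (x j) ^ 2 / r) - L x))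
        Filter.atTop (nhds (Γ₁ x))) :
    (∀ x : Fin d → ℝ, (∀ j, 0 ≤ x j) →
      Filter.Tendsto
        (fun t : ℝ => 2 * t * (t * (1 - C (fun j => 1 - x j / t)) - L x))
        Filter.atTop (nhds (Γ₁ x - (L x) ^ 2))) ∧
    (∃ x : Fin d → ℝ, (∀ j, 0 ≤ x j) ∧ Γ₁ x - (L x) ^ 2 ≠ 0) ∧
    ((∀ T : ℝ, 0 < T → TendstoUniformlyOn
        (fun (t : ℝ) (x : Fin d → ℝ) =>
          2 * t * (t * (1 - C (fun j => 1 - x j / t)) - L x))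
        (fun x => Γ₁ x - (L x) ^ 2)
        Filter.atTop (Set.Icc (0 : Fin d → ℝ) (fun _ => T)))
      ↔ ContinuousOn Γ₁ (Set.Ici (0 : Fin d → ℝ))) ∧
    (SOpot d C L (fun x => Γ₁ x - (L x) ^ 2) (fun t => 1 / (2 * t))
      ↔ ContinuousOn Γ₁ (Set.Ici (0 : Fin d → ℝ))) := by
  have hLcont := hDOA.continuousOn hC
  have hcore T (hT : 0 < T) :=
    tendstoUniformlyOn_two_mul_tailApprox_sub hd hL hC hDOA hSO hScont hαpos hα0 hc0 hT
  have h2t : Tendsto (fun t : ℝ => 2 * t) atTop atTop := tendsto_id.const_mul_atTop two_pos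
  have hsplit t x : 2 * t * (tailApprox C t x - L x) =
      2 * t * (tailApprox C t x - L (fun j => x j + x j ^ 2 / (2 * t)))
        + gammaQuotient L (2 * t) x := by
    unfold gammaQuotient; ring
  have hunif : (∀ T : ℝ, 0 < T → TendstoUniformlyOn
      (fun t x => 2 * t * (tailApprox C t x - L x)) (fun x => Γ₁ x - L x ^ 2) atTop
      (Set.Icc 0 (fun _ => T))) ↔ ContinuousOn Γ₁ (Set.Ici 0) := by
    refine ⟨fun h => ?_, fun hΓcont T hT => ?_⟩
    · exact ((hDOA.continuousOn_of_tendstoUniformlyOn hC h).add (hLcont.pow 2)).congr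
        fun x _ => by simp only [Pi.add_apply, Pi.pow_apply]; ring
    · have hΓunif := hL.tendstoUniformlyOn_gammaQuotient hLcont hΓ₁ hΓcont T
      have hΓunif2 : TendstoUniformlyOn (fun t => gammaQuotient L (2 * t)) Γ₁ atTop
          (Set.Icc 0 (fun _ => T)) := fun u hu => h2t.eventually (hΓunif u hu)
      refine (((hcore T hT).add hΓunif2).congr
        (Eventually.of_forall fun t x _ => (hsplit t x).symm)).congr_right fun x _ => ?_
      simp only [Pi.add_apply]; ring
  refine ⟨fun x hx => ?_, hL.exists_sub_sq_ne_zero hd hLne hΓ₁, hunif,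
    sOpot_one_div_two_mul_iff.trans hunif⟩
  obtain ⟨T, hT, hxT⟩ := exists_pos_forall_lt x
  convert ((hcore T hT).tendsto_at ⟨hx, fun j => (hxT j).le⟩).add ((hΓ₁ x hx).comp h2t)
    using 1
  · exact funext fun t => hsplit t x
  · rw [neg_add_eq_sub]

/-- Theorem 2.6 (b)(ii). If (SO)_b holds with `2r·α_b(r) → 0` and
`L ≠ L_∨`, then (i) `2t(t(1 − C(1 − x/t)) − L(x)) → Γ₁(x) − L(x)²` pointwise with
non-null limit, and (ii) the convergence (equivalently, (SO)_p with `α_p(t) = 1/(2t)`)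
is uniform on `[0,T]^d` iff `Γ₁` is continuous. -/
theorem statement13 {d : ℕ} (hd : 0 < d) (C L Sb : (Fin d → ℝ) → ℝ) (αb : ℝ → ℝ) (ρb : ℝ)
    (hL : IsSTDF d L) (hC : IsCopulaLike d C)
    (hLne : ∃ x : Fin d → ℝ, (∀ j, 0 ≤ x j) ∧ L x ≠ ⨆ j, x j)
    (hDOA : PotDOA d C L)
    (hαpos : ∀ r : ℝ, 0 < r → 0 < αb r)
    (hα0 : Filter.Tendsto αb Filter.atTop (nhds 0))
    (hScont : ContinuousOn Sb (Set.Icc (0 : Fin d → ℝ) (fun _ => 1)))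
    (hSnonnull : ∃ u : Fin d → ℝ, (∀ j, 0 ≤ u j ∧ u j ≤ 1) ∧ Sb u ≠ 0)
    (hSO : SObm d C (CinfFun d L) Sb αb)
    (hρ : ρb ≤ 0) (hrv : RegVary αb ρb)
    (hc0 : Filter.Tendsto (fun r : ℝ => 2 * r * αb r) Filter.atTop (nhds 0))
    (Γ₁ : (Fin d → ℝ) → ℝ)
    (hΓ₁ : ∀ x : Fin d → ℝ, (∀ j, 0 ≤ x j) →
      Filter.Tendsto (fun r : ℝ => r * (L (fun j => x j + (x j) ^ 2 / r) - L x))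
        Filter.atTop (nhds (Γ₁ x))) :
    (∀ x : Fin d → ℝ, (∀ j, 0 ≤ x j) →
      Filter.Tendsto
        (fun t : ℝ => 2 * t * (t * (1 - C (fun j => 1 - x j / t)) - L x))
        Filter.atTop (nhds (Γ₁ x - (L x) ^ 2))) ∧
    (∃ x : Fin d → ℝ, (∀ j, 0 ≤ x j) ∧ Γ₁ x - (L x) ^ 2 ≠ 0) ∧
    ((∀ T : ℝ, 0 < T → TendstoUniformlyOn
        (fun (t : ℝ) (x : Fin d → ℝ) =>
          2 * t * (t * (1 - C (fun j => 1 - x j / t)) - L x))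
        (fun x => Γ₁ x - (L x) ^ 2)
        Filter.atTop (Set.Icc (0 : Fin d → ℝ) (fun _ => T)))
      ↔ ContinuousOn Γ₁ (Set.Ici (0 : Fin d → ℝ))) ∧
    (SOpot d C L (fun x => Γ₁ x - (L x) ^ 2) (fun t => 1 / (2 * t))
      ↔ ContinuousOn Γ₁ (Set.Ici (0 : Fin d → ℝ))) :=
  statement13_general hd C L Sb αb hL hC hLne hDOA hαpos hα0 hScont hSO hc0 Γ₁ hΓ₁
end
end

section
/- Let L be a d-variate stable tail dependence function that is componentwise nondecreasing, and let Γ₂(x) = lim_{r→∞} r·(L(x) − L(x − x²/r)) with x² := (x_1²,…,x_d²). Then Γ₂(x) = L(x)² for all x ∈ [0,∞)^d if and only if L = L_∨, where L_∨(x) = max(x_1,…,x_d). -/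
open Filter Topology

noncomputable section

/-!
With `M = max_j x_j`, every coordinate satisfies `x_j - x_j²/r ≥ (1 - M/r) x_j`, so monotonicity
and homogeneity give `r (L(x) - L(x - x²/r)) ≤ M L(x)`, i.e. `Γ₂(x) ≤ M L(x)`. Together with
`M ≤ L(x)`, the identity `Γ₂(x) = L(x)²` forces `L(x) = M`. Conversely, for `L = max` the
difference quotient equals `M²` exactly once `r > 2M`.
-/

theorem sub_sq_div_le_sub_sq_div {a b r : ℝ} (ha : 0 ≤ a) (hab : a ≤ b) (hbr : 2 * b < r) :
    a - a ^ 2 / r ≤ b - b ^ 2 / r := by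
  have hr : 0 < r := by linarith
  have : (b ^ 2 - a ^ 2) / r ≤ b - a := by
    rw [div_le_iff₀ hr]; nlinarith [mul_nonneg (sub_nonneg.2 hab) (by linarith : 0 ≤ r - a - b)]
  rw [sub_div] at this
  linarith

theorem one_sub_div_mul_le_sub_sq_div {a M r : ℝ} (ha : 0 ≤ a) (haM : a ≤ M) (hr : 0 < r) :
    (1 - M / r) * a ≤ a - a ^ 2 / r := by
  have : a ^ 2 / r ≤ M * a / r := by gcongr; nlinarith
  calc (1 - M / r) * a = a - M * a / r := by ring
    _ ≤ a - a ^ 2 / r := by linarith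

section

variable {ι : Type*} {L : (ι → ℝ) → ℝ}

theorem mul_sub_apply_shrink_le
    (hhom : ∀ s : ℝ, 0 < s → ∀ x : ι → ℝ, (∀ j, 0 ≤ x j) → L (s • x) = s * L x)
    (hmono : ∀ x y : ι → ℝ, (∀ j, 0 ≤ x j) → (∀ j, x j ≤ y j) → L x ≤ L y)
    {x : ι → ℝ} (hx : ∀ j, 0 ≤ x j) {M r : ℝ} (hM : 0 ≤ M) (hxM : ∀ j, x j ≤ M) (hMr : M < r) :
    r * (L x - L (fun j => x j - x j ^ 2 / r)) ≤ M * L x := by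
  have hr : 0 < r := hM.trans_lt hMr
  have hs : 0 < 1 - M / r := by rw [sub_pos, div_lt_one hr]; exact hMr
  have hshrink : (1 - M / r) * L x ≤ L (fun j => x j - x j ^ 2 / r) := by
    rw [← hhom _ hs x hx]
    exact hmono _ _ (fun j => mul_nonneg hs.le (hx j))
      (fun j => one_sub_div_mul_le_sub_sq_div (hx j) (hxM j) hr)
  calc r * (L x - L (fun j => x j - x j ^ 2 / r))
      ≤ r * (L x - (1 - M / r) * L x) := by gcongr
    _ = M * L x := by field_simp; ring

variable [Finite ι]

theorem le_iSup_mul_of_tendsto_mul_sub_apply_shrink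
    (hhom : ∀ s : ℝ, 0 < s → ∀ x : ι → ℝ, (∀ j, 0 ≤ x j) → L (s • x) = s * L x)
    (hmono : ∀ x y : ι → ℝ, (∀ j, 0 ≤ x j) → (∀ j, x j ≤ y j) → L x ≤ L y)
    {x : ι → ℝ} (hx : ∀ j, 0 ≤ x j) {Γ : ℝ}
    (hΓ : Tendsto (fun r => r * (L x - L (fun j => x j - x j ^ 2 / r))) atTop (𝓝 Γ)) :
    Γ ≤ (⨆ j, x j) * L x := by
  have hxM : ∀ j, x j ≤ ⨆ j, x j := le_ciSup (Set.finite_range x).bddAbove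
  have hM : 0 ≤ ⨆ j, x j := Real.iSup_nonneg hx
  refine le_of_tendsto hΓ ?_
  filter_upwards [eventually_gt_atTop (⨆ j, x j)] with r hr
  exact mul_sub_apply_shrink_le hhom hmono hx hM hxM hr

theorem tendsto_mul_sub_apply_shrink_of_eq_iSup [Nonempty ι]
    (hL : ∀ x : ι → ℝ, (∀ j, 0 ≤ x j) → L x = ⨆ j, x j) {x : ι → ℝ} (hx : ∀ j, 0 ≤ x j) :
    Tendsto (fun r => r * (L x - L (fun j => x j - x j ^ 2 / r))) atTop
      (𝓝 ((⨆ j, x j) ^ 2)) := by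
  obtain ⟨j₀, hj₀⟩ := Finite.exists_max x
  have hsup : ∀ y : ι → ℝ, (∀ j, y j ≤ y j₀) → ⨆ j, y j = y j₀ := fun y hy =>
    ciSup_eq_of_forall_le_of_forall_lt_exists_gt hy fun _ hw => ⟨j₀, hw⟩
  rw [hsup x hj₀]
  refine tendsto_const_nhds.congr' ?_
  filter_upwards [eventually_gt_atTop (2 * x j₀)] with r hr
  have hr0 : 0 < r := by linarith [hx j₀]
  -- On `[0, r/2]` the map `t ↦ t - t²/r` is nondecreasing, so it preserves the argmax.
  have hshrink : ∀ j, x j - x j ^ 2 / r ≤ x j₀ - x j₀ ^ 2 / r := fun j =>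
    sub_sq_div_le_sub_sq_div (hx j) (hj₀ j) hr
  have hshrink_nonneg : ∀ j, 0 ≤ x j - x j ^ 2 / r := fun j => by
    simpa using sub_sq_div_le_sub_sq_div le_rfl (hx j) (by linarith [hj₀ j])
  rw [hL x hx, hL _ hshrink_nonneg, hsup x hj₀, hsup _ hshrink]
  field_simp
  ring

end

/-- for a componentwise nondecreasing stdf `L`, the identity `Γ₂ = L²`
on `[0,∞)^d` holds if and only if `L = L_∨`, the stdf of perfect tail dependence. -/
theorem statement15 {d : ℕ} (hd : 0 < d) (L : (Fin d → ℝ) → ℝ) (hL : IsSTDF d L)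
    (hmono : ∀ x y : Fin d → ℝ, (∀ j, 0 ≤ x j) → (∀ j, x j ≤ y j) → L x ≤ L y)
    (Γ₂ : (Fin d → ℝ) → ℝ)
    (hΓ₂ : ∀ x : Fin d → ℝ, (∀ j, 0 ≤ x j) →
      Filter.Tendsto (fun r : ℝ => r * (L x - L (fun j => x j - (x j) ^ 2 / r)))
        Filter.atTop (nhds (Γ₂ x))) :
    (∀ x : Fin d → ℝ, (∀ j, 0 ≤ x j) → Γ₂ x = (L x) ^ 2) ↔
    (∀ x : Fin d → ℝ, (∀ j, 0 ≤ x j) → L x = ⨆ j, x j) := by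
  obtain ⟨hhom, -, -, hbd⟩ := hL
  have : Nonempty (Fin d) := ⟨⟨0, hd⟩⟩
  have hmax_le : ∀ x : Fin d → ℝ, (∀ j, 0 ≤ x j) → ⨆ j, x j ≤ L x := fun x hx =>
    ciSup_le (hbd x hx).1
  constructor
  · intro hΓL x hx
    have hM : 0 ≤ ⨆ j, x j := Real.iSup_nonneg hx
    have hsq : L x ^ 2 ≤ (⨆ j, x j) * L x := by
      rw [← hΓL x hx]
      exact le_iSup_mul_of_tendsto_mul_sub_apply_shrink hhom hmono hx (hΓ₂ x hx)
    refine le_antisymm ?_ (hmax_le x hx)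
    nlinarith [hmax_le x hx]
  · intro hLmax x hx
    rw [tendsto_nhds_unique (hΓ₂ x hx) (tendsto_mul_sub_apply_shrink_of_eq_iSup hLmax hx),
      hLmax x hx]
end
end

section
/- Let d ≥ 1, let α ∈ (0,1], and let L : [0,∞)^d → [0,∞) satisfy max(x_1,…,x_d) ≤ L(x) for all x and the Lipschitz bound |L(x) − L(y)| ≤ Σ_j |x_j − y_j|. Then the map x ↦ L(x_1^{1/α},…,x_d^{1/α})^α is Lipschitz with respect to the ℓ¹-norm with constant 1: for all x, y ∈ [0,∞)^d, |L(x^{1/α})^α − L(y^{1/α})^α| ≤ Σ_{j=1}^d |x_j − y_j|, where x^{1/α} := (x_1^{1/α},…,x_d^{1/α}). -/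
open Filter Topology

noncomputable section

/- Put `x' = x^{1/α}`, `y' = y^{1/α}` and `v = L(y')`. The Lipschitz bound gives
`L(x') ≤ v + ∑ⱼ δⱼ` with `δⱼ = |x'ⱼ - y'ⱼ|`. Because `t ↦ t^α` is concave, its increments
shrink as the base point grows. This splits `(v + ∑ⱼ δⱼ)^α - v^α` into `∑ⱼ ((v + δⱼ)^α - v^α)`,
and, since `min(x'ⱼ, y'ⱼ) ≤ y'ⱼ ≤ v`, bounds each term by the increment from `min(x'ⱼ, y'ⱼ)`
to `max(x'ⱼ, y'ⱼ)`, which is `|xⱼ - yⱼ|`. -/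

theorem ConcaveOn.map_add_sub_map_le_of_le {s : Set ℝ} {f : ℝ → ℝ} (hf : ConcaveOn ℝ s f)
    {a b δ : ℝ} (ha : a ∈ s) (hbδ : b + δ ∈ s) (hab : a ≤ b) (hδ : 0 ≤ δ) :
    f (b + δ) - f b ≤ f (a + δ) - f a := by
  rcases hδ.eq_or_lt with rfl | hδ
  · simp
  have hD : 0 < b + δ - a := by linarith
  have hw₁ : 0 ≤ δ / (b + δ - a) := div_nonneg hδ.le hD.le
  have hw₂ : 0 ≤ (b - a) / (b + δ - a) := div_nonneg (sub_nonneg.2 hab) hD.le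
  have hw : δ / (b + δ - a) + (b - a) / (b + δ - a) = 1 := by field_simp; ring
  -- `b` and `a + δ` are the two convex combinations of `a` and `b + δ` with swapped weights.
  have hb := hf.2 ha hbδ hw₁ hw₂ hw
  have haδ := hf.2 ha hbδ hw₂ hw₁ (by rw [add_comm, hw])
  simp only [smul_eq_mul] at hb haδ
  have eb : δ / (b + δ - a) * a + (b - a) / (b + δ - a) * (b + δ) = b := by
    field_simp; ring
  have eaδ : (b - a) / (b + δ - a) * a + δ / (b + δ - a) * (b + δ) = a + δ := by
    field_simp; ring
  rw [eb] at hb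
  rw [eaδ] at haδ
  linear_combination hb + haδ - (f a + f (b + δ)) * hw

theorem ConcaveOn.map_add_sum_sub_map_le {ι : Type*} {f : ℝ → ℝ} {v : ℝ}
    (hf : ConcaveOn ℝ (Set.Ici v) f) (s : Finset ι) {δ : ι → ℝ} (hδ : ∀ i ∈ s, 0 ≤ δ i) :
    f (v + ∑ i ∈ s, δ i) - f v ≤ ∑ i ∈ s, (f (v + δ i) - f v) := by
  induction s using Finset.cons_induction with
  | empty => simp
  | cons i s _ ih =>
    rw [Finset.forall_mem_cons] at hδ
    have hS : 0 ≤ ∑ j ∈ s, δ j := Finset.sum_nonneg hδ.2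
    have hstep := hf.map_add_sub_map_le_of_le (a := v) (b := v + ∑ j ∈ s, δ j) (δ := δ i)
      Set.self_mem_Ici (Set.mem_Ici.2 (by linarith [hδ.1])) (le_add_of_nonneg_right hS) hδ.1
    rw [Finset.sum_cons, Finset.sum_cons, ← add_assoc, add_right_comm v]
    linarith [ih hδ.2]

theorem rpow_add_abs_sub_sub_rpow_le {α : ℝ} (h0 : 0 < α) (h1 : α ≤ 1) {a b v : ℝ}
    (ha : 0 ≤ a) (hb : 0 ≤ b) (hv : min (a ^ (1 / α)) (b ^ (1 / α)) ≤ v) :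
    (v + |a ^ (1 / α) - b ^ (1 / α)|) ^ α - v ^ α ≤ |a - b| := by
  wlog hab : a ≤ b generalizing a b
  · simpa only [abs_sub_comm] using this hb ha (by rwa [min_comm]) (le_of_not_ge hab)
  have hinv {z : ℝ} (hz : 0 ≤ z) : (z ^ (1 / α)) ^ α = z := by
    rw [one_div, Real.rpow_inv_rpow hz h0.ne']
  set a' := a ^ (1 / α)
  set b' := b ^ (1 / α)
  have ha' : 0 ≤ a' := Real.rpow_nonneg ha _
  have hab' : a' ≤ b' := Real.rpow_le_rpow ha hab (by positivity)
  rw [min_eq_left hab'] at hv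
  rw [abs_sub_comm, abs_of_nonneg (sub_nonneg.2 hab'), abs_sub_comm,
    abs_of_nonneg (sub_nonneg.2 hab)]
  calc (v + (b' - a')) ^ α - v ^ α ≤ (a' + (b' - a')) ^ α - a' ^ α :=
        (Real.concaveOn_rpow h0.le h1).map_add_sub_map_le_of_le ha'
          (Set.mem_Ici.2 (by linarith)) hv (sub_nonneg.2 hab')
    _ = b - a := by rw [add_sub_cancel, hinv hb, hinv ha]

theorem rpow_comp_rpow_inv_sub_le {ι : Type*} [Fintype ι] [Nonempty ι] {α : ℝ} (h0 : 0 < α)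
    (h1 : α ≤ 1) {L : (ι → ℝ) → ℝ} (hmax : ∀ x : ι → ℝ, (∀ j, 0 ≤ x j) → ∀ j, x j ≤ L x)
    (hlip : ∀ x y : ι → ℝ, (∀ j, 0 ≤ x j) → (∀ j, 0 ≤ y j) →
      |L x - L y| ≤ ∑ j, |x j - y j|)
    {x y : ι → ℝ} (hx : ∀ j, 0 ≤ x j) (hy : ∀ j, 0 ≤ y j) :
    L (fun j => x j ^ (1 / α)) ^ α - L (fun j => y j ^ (1 / α)) ^ α ≤ ∑ j, |x j - y j| := by
  set x' : ι → ℝ := fun j => x j ^ (1 / α)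
  set y' : ι → ℝ := fun j => y j ^ (1 / α)
  have hx' : ∀ j, 0 ≤ x' j := fun j => Real.rpow_nonneg (hx j) _
  have hy' : ∀ j, 0 ≤ y' j := fun j => Real.rpow_nonneg (hy j) _
  obtain ⟨j₀⟩ := ‹Nonempty ι›
  have hu : 0 ≤ L x' := (hx' j₀).trans (hmax x' hx' j₀)
  have hv : 0 ≤ L y' := (hy' j₀).trans (hmax y' hy' j₀)
  have hLx : L x' ≤ L y' + ∑ j, |x' j - y' j| := by
    linarith [le_abs_self (L x' - L y'), hlip x' y' hx' hy']
  have hconc : ConcaveOn ℝ (Set.Ici (L y')) (· ^ α) :=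
    (Real.concaveOn_rpow h0.le h1).subset (Set.Ici_subset_Ici.2 hv) (convex_Ici _)
  calc L x' ^ α - L y' ^ α ≤ (L y' + ∑ j, |x' j - y' j|) ^ α - L y' ^ α := by
        gcongr
    _ ≤ ∑ j, ((L y' + |x' j - y' j|) ^ α - L y' ^ α) :=
        hconc.map_add_sum_sub_map_le _ fun j _ => abs_nonneg _
    _ ≤ ∑ j, |x j - y j| := Finset.sum_le_sum fun j _ =>
        rpow_add_abs_sub_sub_rpow_le h0 h1 (hx j) (hy j)
          ((min_le_right _ _).trans (hmax y' hy' j))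

/-- the map `x ↦ L(x^{1/α})^α` is ℓ¹-Lipschitz with constant 1 on the
nonnegative orthant, whenever `max_j x_j ≤ L(x)` and `L` is ℓ¹-Lipschitz with
constant 1, and `α ∈ (0,1]`. -/
theorem statement16 {d : ℕ} (hd : 1 ≤ d) (α : ℝ) (hα : α ∈ Set.Ioc (0 : ℝ) 1)
    (L : (Fin d → ℝ) → ℝ)
    (hmax : ∀ x : Fin d → ℝ, (∀ j, 0 ≤ x j) → ∀ j, x j ≤ L x)
    (hlip : ∀ x y : Fin d → ℝ, (∀ j, 0 ≤ x j) → (∀ j, 0 ≤ y j) →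
      |L x - L y| ≤ ∑ j, |x j - y j|) :
    ∀ x y : Fin d → ℝ, (∀ j, 0 ≤ x j) → (∀ j, 0 ≤ y j) →
      |L (fun j => x j ^ (1 / α)) ^ α - L (fun j => y j ^ (1 / α)) ^ α|
        ≤ ∑ j, |x j - y j| := by
  intro x y hx hy
  have : Nonempty (Fin d) := ⟨⟨0, hd⟩⟩
  rw [abs_sub_le_iff]
  refine ⟨rpow_comp_rpow_inv_sub_le hα.1 hα.2 hmax hlip hx hy, ?_⟩
  simpa only [abs_sub_comm] using rpow_comp_rpow_inv_sub_le hα.1 hα.2 hmax hlip hy hx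
end
end
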